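/- arXiv:0812.2933 — 10 statements merged into one kernel-verified Lean document; each statement's English description precedes it below -/
import Mathlib

section
/- Let A and B be normed vector spaces over ℝ and f : A → B satisfy ‖f((x₂-x₁)/3) + f((x₁-3x₃)/3) + f((3x₁+3x₃-x₂)/3)‖ ≤ ‖f(x₁)‖ for all x₁,x₂,x₃ ∈ A. Then f is odd: f(-x) = -f(x) for all x ∈ A. -/
theorem eq_zero_of_norm_add_add_le {E : Type*} [NormedAddCommGroup E] [NormedSpace ℝ E] {v : E}
    (h : ‖v + v + v‖ ≤ ‖v‖) : v = 0 := by
  rw [← two_nsmul, ← succ_nsmul, RCLike.norm_nsmul ℝ, nsmul_eq_mul] at h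
  exact norm_eq_zero.mp (by norm_num at h; linarith [norm_nonneg v])

theorem stmt_1 {A B : Type*} [NormedAddCommGroup A] [NormedSpace ℝ A]
    [NormedAddCommGroup B] [NormedSpace ℝ B] (f : A → B)
    (h : ∀ x₁ x₂ x₃ : A,
      ‖f ((3:ℝ)⁻¹ • (x₂ - x₁)) + f ((3:ℝ)⁻¹ • (x₁ - (3:ℝ) • x₃)) +
        f ((3:ℝ)⁻¹ • ((3:ℝ) • x₁ + (3:ℝ) • x₃ - x₂))‖ ≤ ‖f x₁‖) :
    ∀ x : A, f (-x) = -f x := by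
  have hf0 : f 0 = 0 := eq_zero_of_norm_add_add_le (by simpa using h 0 0 0)
  intro x
  have hx : ‖f (-x) + f x‖ ≤ 0 := by simpa [smul_smul, hf0] using h 0 0 x
  exact eq_neg_of_add_eq_zero_left (norm_le_zero_iff.mp hx)
end

section
/- Let A and B be normed vector spaces over ℝ and f : A → B satisfy ‖f((x₂-x₁)/3) + f((x₁-3x₃)/3) + f((3x₁+3x₃-x₂)/3)‖ ≤ ‖f(x₁)‖ for all x₁,x₂,x₃ ∈ A. Then f(2x) = 2·f(x) for all x ∈ A. -/
/-!
With `x₁ = 0` the right-hand side vanishes once `f 0 = 0` is known, so the inequality becomes the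
equation `f u + f (-v) + f (v - u) = 0`; this makes `f` odd and then additive.
-/

section ThreeTermInequality

variable {A B : Type*} [AddCommGroup A] [Module ℝ A] [NormedAddCommGroup B] [NormedSpace ℝ B]
  {f : A → B}
  (h : ∀ x₁ x₂ x₃ : A,
    ‖f ((3:ℝ)⁻¹ • (x₂ - x₁)) + f ((3:ℝ)⁻¹ • (x₁ - (3:ℝ) • x₃)) +
      f ((3:ℝ)⁻¹ • ((3:ℝ) • x₁ + (3:ℝ) • x₃ - x₂))‖ ≤ ‖f x₁‖)
include h

theorem map_zero_of_three_term_le : f 0 = 0 := by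
  have h000 := h 0 0 0
  simp only [sub_self, smul_zero, add_zero] at h000
  have e : f 0 + f 0 + f 0 = (3:ℝ) • f 0 := by module
  rw [e, norm_smul, Real.norm_ofNat] at h000
  exact norm_le_zero_iff.mp (by linarith [norm_nonneg (f 0)])

theorem map_add_map_neg_add_map_sub_of_three_term_le (u v : A) :
    f u + f (-v) + f (v - u) = 0 := by
  have h0uv := h 0 ((3:ℝ) • u) v
  have e₁ : (3:ℝ)⁻¹ • ((3:ℝ) • u - 0) = u := by module
  have e₂ : (3:ℝ)⁻¹ • ((0:A) - (3:ℝ) • v) = -v := by module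
  have e₃ : (3:ℝ)⁻¹ • ((3:ℝ) • (0:A) + (3:ℝ) • v - (3:ℝ) • u) = v - u := by module
  rwa [e₁, e₂, e₃, map_zero_of_three_term_le h, norm_zero, norm_le_zero_iff] at h0uv

theorem map_neg_of_three_term_le (v : A) : f (-v) = -f v := by
  have h0v := map_add_map_neg_add_map_sub_of_three_term_le h 0 v
  rw [map_zero_of_three_term_le h, zero_add, sub_zero] at h0v
  exact eq_neg_of_add_eq_zero_left h0v

theorem map_add_of_three_term_le (u v : A) : f (u + v) = f u + f v := by
  have huv := map_add_map_neg_add_map_sub_of_three_term_le h (u + v) u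
  rw [map_neg_of_three_term_le h, sub_add_cancel_left, map_neg_of_three_term_le h] at huv
  linear_combination (norm := abel) huv

end ThreeTermInequality

theorem stmt_2 {A B : Type*} [NormedAddCommGroup A] [NormedSpace ℝ A]
    [NormedAddCommGroup B] [NormedSpace ℝ B] (f : A → B)
    (h : ∀ x₁ x₂ x₃ : A,
      ‖f ((3:ℝ)⁻¹ • (x₂ - x₁)) + f ((3:ℝ)⁻¹ • (x₁ - (3:ℝ) • x₃)) +
        f ((3:ℝ)⁻¹ • ((3:ℝ) • x₁ + (3:ℝ) • x₃ - x₂))‖ ≤ ‖f x₁‖) :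
    ∀ x : A, f ((2:ℝ) • x) = (2:ℝ) • f x := by
  intro x
  rw [two_smul, two_smul, map_add_of_three_term_le h]
end

section
/- Let A and B be normed vector spaces over ℝ and f : A → B satisfy ‖f((x₂-x₁)/3) + f((x₁-3x₃)/3) + f((3x₁+3x₃-x₂)/3)‖ ≤ ‖f(x₁)‖ for all x₁,x₂,x₃ ∈ A. Then f(3x) = 3·f(x) for all x ∈ A. -/
/-!
Taking `x₁ = 0` makes the right-hand side vanish once `f 0 = 0` is known, and the remaining
identity `f u + f (-v) + f (v - u) = 0` says that `f` is odd and additive; `f (3 • x) = 3 • f x`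
then holds for any additive map.
-/

section Cauchy

variable {A B : Type*} [AddCommGroup A] [AddCommGroup B]

lemma map_neg_of_add_map_neg_add_map_sub_eq_zero {f : A → B} (hf0 : f 0 = 0)
    (hf : ∀ u v, f u + f (-v) + f (v - u) = 0) (u : A) : f (-u) = -f u := by
  have := hf u 0
  rw [neg_zero, hf0, zero_sub, add_zero] at this
  exact eq_neg_of_add_eq_zero_right this

lemma map_add_of_add_map_neg_add_map_sub_eq_zero {f : A → B} (hf0 : f 0 = 0)
    (hf : ∀ u v, f u + f (-v) + f (v - u) = 0) (a b : A) : f (a + b) = f a + f b := by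
  have := hf a (a + b)
  rw [map_neg_of_add_map_neg_add_map_sub_eq_zero hf0 hf, add_sub_cancel_left] at this
  rw [← sub_eq_zero, ← neg_eq_zero, ← this]
  abel

end Cauchy

lemma eq_zero_of_norm_add_self_add_self_le {B : Type*} [NormedAddCommGroup B] [NormedSpace ℝ B]
    {y : B} (hy : ‖y + y + y‖ ≤ ‖y‖) : y = 0 := by
  have h3 : y + y + y = (3 : ℝ) • y := by module
  rw [h3, norm_smul, Real.norm_ofNat] at hy
  exact norm_le_zero_iff.mp (by linarith [norm_nonneg y])

lemma map_add_of_norm_le {A B : Type*} [NormedAddCommGroup A] [NormedSpace ℝ A]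
    [NormedAddCommGroup B] [NormedSpace ℝ B] (f : A → B)
    (h : ∀ x₁ x₂ x₃ : A,
      ‖f ((3:ℝ)⁻¹ • (x₂ - x₁)) + f ((3:ℝ)⁻¹ • (x₁ - (3:ℝ) • x₃)) +
        f ((3:ℝ)⁻¹ • ((3:ℝ) • x₁ + (3:ℝ) • x₃ - x₂))‖ ≤ ‖f x₁‖) (a b : A) :
    f (a + b) = f a + f b := by
  have hf0 : f 0 = 0 := eq_zero_of_norm_add_self_add_self_le (by simpa using h 0 0 0)
  refine map_add_of_add_map_neg_add_map_sub_eq_zero hf0 (fun u v => ?_) a b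
  have huv := h 0 ((3:ℝ) • u) v
  have e₁ : (3:ℝ)⁻¹ • ((3:ℝ) • u - 0) = u := by module
  have e₂ : (3:ℝ)⁻¹ • ((0:A) - (3:ℝ) • v) = -v := by module
  have e₃ : (3:ℝ)⁻¹ • ((3:ℝ) • (0:A) + (3:ℝ) • v - (3:ℝ) • u) = v - u := by module
  rw [e₁, e₂, e₃, hf0, norm_zero] at huv
  exact norm_le_zero_iff.mp huv

theorem stmt_3 {A B : Type*} [NormedAddCommGroup A] [NormedSpace ℝ A]
    [NormedAddCommGroup B] [NormedSpace ℝ B] (f : A → B)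
    (h : ∀ x₁ x₂ x₃ : A,
      ‖f ((3:ℝ)⁻¹ • (x₂ - x₁)) + f ((3:ℝ)⁻¹ • (x₁ - (3:ℝ) • x₃)) +
        f ((3:ℝ)⁻¹ • ((3:ℝ) • x₁ + (3:ℝ) • x₃ - x₂))‖ ≤ ‖f x₁‖) :
    ∀ x : A, f ((3:ℝ) • x) = (3:ℝ) • f x := by
  intro x
  simpa only [ofNat_smul_eq_nsmul, AddMonoidHom.mk'_apply]
    using map_nsmul (AddMonoidHom.mk' f (map_add_of_norm_le f h)) 3 x
end

section
/- Let A and B be normed vector spaces over ℝ and f : A → B satisfy ‖f((x₂-x₁)/3) + f((x₁-3x₃)/3) + f((3x₁+3x₃-x₂)/3)‖ ≤ ‖f(x₁)‖ for all x₁,x₂,x₃ ∈ A. Then f is additive: f(x+y) = f(x) + f(y) for all x,y ∈ A. -/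
/-!
Specialising `x₁ = 0` shows first `‖3 f(0)‖ ≤ ‖f(0)‖`, so `f 0 = 0`, and then, with
`x₂ = 3a` and `x₃ = -b`, that `f a + f b + f c = 0` whenever `a + b + c = 0`.
Taking `(a, -a, 0)` makes `f` odd, and `(x, y, -(x + y))` then gives additivity.
-/

theorem eq_zero_of_norm_add_add_self_le {E : Type*} [NormedAddCommGroup E] [NormedSpace ℝ E]
    {a : E} (h : ‖a + a + a‖ ≤ ‖a‖) : a = 0 := by
  have h3 : ‖a + a + a‖ = 3 * ‖a‖ := by
    rw [show a + a + a = (3 : ℝ) • a by module, norm_smul]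
    norm_num
  exact norm_eq_zero.mp (by linarith [norm_nonneg a])

theorem map_add_of_map_add_add_eq_zero {G H : Type*} [AddCommGroup G] [AddCommGroup H]
    {f : G → H} (h0 : f 0 = 0) (hf : ∀ a b c, a + b + c = 0 → f a + f b + f c = 0)
    (x y : G) : f (x + y) = f x + f y := by
  have hneg : ∀ a, f (-a) = -f a := fun a =>
    eq_neg_of_add_eq_zero_right (by simpa [h0] using hf a (-a) 0 (by abel))
  have hxy := hf x y (-(x + y)) (by abel)
  rw [hneg, ← sub_eq_add_neg, sub_eq_zero] at hxy
  exact hxy.symm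

theorem stmt_4 {A B : Type*} [NormedAddCommGroup A] [NormedSpace ℝ A]
    [NormedAddCommGroup B] [NormedSpace ℝ B] (f : A → B)
    (h : ∀ x₁ x₂ x₃ : A,
      ‖f ((3:ℝ)⁻¹ • (x₂ - x₁)) + f ((3:ℝ)⁻¹ • (x₁ - (3:ℝ) • x₃)) +
        f ((3:ℝ)⁻¹ • ((3:ℝ) • x₁ + (3:ℝ) • x₃ - x₂))‖ ≤ ‖f x₁‖) :
    ∀ x y : A, f (x + y) = f x + f y := by
  have h0 : f 0 = 0 := eq_zero_of_norm_add_add_self_le (by simpa using h 0 0 0)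
  refine map_add_of_map_add_add_eq_zero h0 fun a b c habc => ?_
  have hc : c = -b - a := by rw [← sub_eq_zero, ← habc]; abel
  have hthird : ∀ v : A, (3:ℝ)⁻¹ • (3:ℝ) • v = v := fun v => inv_smul_smul₀ three_ne_zero v
  have key := h 0 ((3:ℝ) • a) (-b)
  rw [sub_zero, zero_sub, smul_zero, zero_add, ← smul_sub, ← smul_neg, hthird, hthird,
    hthird, neg_neg, h0, norm_zero, norm_le_zero_iff] at key
  rwa [hc]
end

section
/- Let A be a complex normed algebra (with a continuous trilinear-type product bounded by the product of norms), B a complex normed space with a ternary product [·,·,·] satisfying ‖[a,b,c]‖ ≤ ‖a‖‖b‖‖c‖, and let f : A → B be ℝ-linear. Suppose p > 1 and θ ≥ 0 are such that ‖f([x₁,x₂,x₃]) - [f(x₁),f(x₂),f(x₃)]‖ ≤ θ(‖x₁‖^{3p} + ‖x₂‖^{3p} + ‖x₃‖^{3p}) for all x₁,x₂,x₃ ∈ A, and that the ternary products on A and B are homogeneous of degree 1 in each variable for real scalars. Then f([x₁,x₂,x₃]) = [f(x₁),f(x₂),f(x₃)] for all x₁,x₂,x₃. -/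
/-!
Rescaling `xᵢ ↦ t • xᵢ` multiplies the defect `f [x₁, x₂, x₃] - [f x₁, f x₂, f x₃]` by `t ^ 3`
but the bound by `t ^ (3 * p)`. Hence the defect is at most
`θ (‖x₁‖ ^ (3 * p) + ‖x₂‖ ^ (3 * p) + ‖x₃‖ ^ (3 * p)) t ^ (3 * p - 3)` for every `t > 0`, which
tends to `0` as `t → 0⁺` because `p > 1`.
-/

open Filter Topology

lemma le_zero_of_forall_pow_mul_le_mul_rpow {D C q : ℝ} {k : ℕ} (hkq : (k : ℝ) < q)
    (h : ∀ t > 0, t ^ k * D ≤ C * t ^ q) : D ≤ 0 := by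
  have hq : 0 < q - k := sub_pos.2 hkq
  have hbound : ∀ t > 0, D ≤ C * t ^ (q - k) := fun t ht => by
    rw [Real.rpow_sub ht, Real.rpow_natCast, mul_div_assoc', le_div_iff₀ (by positivity),
      mul_comm]
    exact h t ht
  have hlim : Tendsto (fun t : ℝ => C * t ^ (q - k)) (𝓝[>] 0) (𝓝 0) := by
    have := ((Real.continuousAt_rpow_const 0 (q - k) (Or.inr hq.le)).tendsto.mono_left
      (nhdsWithin_le_nhds (s := Set.Ioi 0))).const_mul C
    rwa [Real.zero_rpow hq.ne', mul_zero] at this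
  exact ge_of_tendsto hlim (eventually_nhdsWithin_of_forall hbound)

lemma smul_smul_smul_eq_pow_smul {E : Type*} [AddCommGroup E] [Module ℝ E]
    {T : E → E → E → E}
    (h₁ : ∀ (r : ℝ) (a b c : E), T (r • a) b c = r • T a b c)
    (h₂ : ∀ (r : ℝ) (a b c : E), T a (r • b) c = r • T a b c)
    (h₃ : ∀ (r : ℝ) (a b c : E), T a b (r • c) = r • T a b c)
    (t : ℝ) (a b c : E) : T (t • a) (t • b) (t • c) = t ^ 3 • T a b c := by
  rw [h₁, h₂, h₃, smul_smul, smul_smul, pow_three, mul_assoc]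

lemma norm_smul_rpow_of_nonneg {E : Type*} [SeminormedAddCommGroup E] [NormedSpace ℝ E]
    {t : ℝ} (ht : 0 ≤ t) (x : E) (q : ℝ) : ‖t • x‖ ^ q = t ^ q * ‖x‖ ^ q := by
  rw [norm_smul, Real.norm_of_nonneg ht, Real.mul_rpow ht (norm_nonneg x)]

theorem stmt_6_general {A B : Type*} [NormedAddCommGroup A] [NormedSpace ℂ A]
    [NormedAddCommGroup B] [NormedSpace ℂ B]
    (TA : A → A → A → A) (TB : B → B → B → B)
    (hTA1 : ∀ (r : ℝ) (a b c : A), TA (r • a) b c = r • TA a b c)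
    (hTA2 : ∀ (r : ℝ) (a b c : A), TA a (r • b) c = r • TA a b c)
    (hTA3 : ∀ (r : ℝ) (a b c : A), TA a b (r • c) = r • TA a b c)
    (hTB1 : ∀ (r : ℝ) (a b c : B), TB (r • a) b c = r • TB a b c)
    (hTB2 : ∀ (r : ℝ) (a b c : B), TB a (r • b) c = r • TB a b c)
    (hTB3 : ∀ (r : ℝ) (a b c : B), TB a b (r • c) = r • TB a b c)
    (f : A → B) (hf : IsLinearMap ℝ f)
    (p θ : ℝ) (hp : 1 < p)
    (h : ∀ x₁ x₂ x₃ : A,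
      ‖f (TA x₁ x₂ x₃) - TB (f x₁) (f x₂) (f x₃)‖ ≤
        θ * (‖x₁‖ ^ (3 * p) + ‖x₂‖ ^ (3 * p) + ‖x₃‖ ^ (3 * p))) :
    ∀ x₁ x₂ x₃ : A, f (TA x₁ x₂ x₃) = TB (f x₁) (f x₂) (f x₃) := by
  intro x₁ x₂ x₃
  rw [← sub_eq_zero, ← norm_le_zero_iff]
  refine le_zero_of_forall_pow_mul_le_mul_rpow (k := 3) (q := 3 * p)
    (C := θ * (‖x₁‖ ^ (3 * p) + ‖x₂‖ ^ (3 * p) + ‖x₃‖ ^ (3 * p))) (by push_cast; linarith)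
    fun t ht => ?_
  have hscaled := h (t • x₁) (t • x₂) (t • x₃)
  rw [smul_smul_smul_eq_pow_smul hTA1 hTA2 hTA3, hf.map_smul, hf.map_smul, hf.map_smul,
    hf.map_smul, smul_smul_smul_eq_pow_smul hTB1 hTB2 hTB3, ← smul_sub, norm_smul,
    Real.norm_of_nonneg (by positivity)] at hscaled
  simp only [norm_smul_rpow_of_nonneg ht.le] at hscaled
  linarith

theorem stmt_6 {A B : Type*} [NormedAddCommGroup A] [NormedSpace ℂ A]
    [NormedAddCommGroup B] [NormedSpace ℂ B]
    (TA : A → A → A → A) (TB : B → B → B → B)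
    (hTAbound : ∀ a b c : A, ‖TA a b c‖ ≤ ‖a‖ * ‖b‖ * ‖c‖)
    (hTBbound : ∀ a b c : B, ‖TB a b c‖ ≤ ‖a‖ * ‖b‖ * ‖c‖)
    (hTA1 : ∀ (r : ℝ) (a b c : A), TA (r • a) b c = r • TA a b c)
    (hTA2 : ∀ (r : ℝ) (a b c : A), TA a (r • b) c = r • TA a b c)
    (hTA3 : ∀ (r : ℝ) (a b c : A), TA a b (r • c) = r • TA a b c)
    (hTB1 : ∀ (r : ℝ) (a b c : B), TB (r • a) b c = r • TB a b c)
    (hTB2 : ∀ (r : ℝ) (a b c : B), TB a (r • b) c = r • TB a b c)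
    (hTB3 : ∀ (r : ℝ) (a b c : B), TB a b (r • c) = r • TB a b c)
    (f : A → B) (hf : IsLinearMap ℝ f)
    (p θ : ℝ) (hp : 1 < p) (hθ : 0 ≤ θ)
    (h : ∀ x₁ x₂ x₃ : A,
      ‖f (TA x₁ x₂ x₃) - TB (f x₁) (f x₂) (f x₃)‖ ≤
        θ * (‖x₁‖ ^ (3 * p) + ‖x₂‖ ^ (3 * p) + ‖x₃‖ ^ (3 * p))) :
    ∀ x₁ x₂ x₃ : A, f (TA x₁ x₂ x₃) = TB (f x₁) (f x₂) (f x₃) :=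
  stmt_6_general TA TB hTA1 hTA2 hTA3 hTB1 hTB2 hTB3 f hf p θ hp h
end

section
/- Let A be a complex normed space equipped with a ternary product [·,·,·] that is homogeneous of degree 1 in each variable for real scalars, and let f : A → A be ℝ-linear. Suppose p > 1, θ ≥ 0, and ‖f([x₁,x₂,x₃]) - [f(x₁),x₂,x₃] - [x₁,f(x₂),x₃] - [x₁,x₂,f(x₃)]‖ ≤ θ(‖x₁‖^{3p} + ‖x₂‖^{3p} + ‖x₃‖^{3p}) for all x₁,x₂,x₃ ∈ A. Then f([x₁,x₂,x₃]) = [f(x₁),x₂,x₃] + [x₁,f(x₂),x₃] + [x₁,x₂,f(x₃)] for all x₁,x₂,x₃ ∈ A. -/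
/-!
Scaling all three arguments by `t > 0` multiplies the derivation defect by `t ^ 3` but the
bound `θ (‖x₁‖ ^ 3p + ‖x₂‖ ^ 3p + ‖x₃‖ ^ 3p)` by `t ^ 3p`. Hence the norm of the defect is at most
a constant times `t ^ (3p - 3)` for every `t > 0`, and letting `t → 0⁺` forces it to vanish since
`p > 1`.
-/

open Filter Topology

section Defect

variable {E : Type*} [AddCommGroup E]

def derivationDefect (T : E → E → E → E) (f : E → E) (x₁ x₂ x₃ : E) : E :=
  f (T x₁ x₂ x₃) - T (f x₁) x₂ x₃ - T x₁ (f x₂) x₃ - T x₁ x₂ (f x₃)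

theorem derivationDefect_eq_zero_iff {T : E → E → E → E} {f : E → E} {x₁ x₂ x₃ : E} :
    derivationDefect T f x₁ x₂ x₃ = 0 ↔
      f (T x₁ x₂ x₃) = T (f x₁) x₂ x₃ + T x₁ (f x₂) x₃ + T x₁ x₂ (f x₃) := by
  rw [derivationDefect, sub_sub, sub_sub, sub_eq_zero, add_assoc]

theorem derivationDefect_smul {R : Type*} [CommRing R] [Module R E] {T : E → E → E → E}
    (hT1 : ∀ (r : R) (a b c : E), T (r • a) b c = r • T a b c)
    (hT2 : ∀ (r : R) (a b c : E), T a (r • b) c = r • T a b c)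
    (hT3 : ∀ (r : R) (a b c : E), T a b (r • c) = r • T a b c)
    {f : E → E} (hf : IsLinearMap R f) (t : R) (x₁ x₂ x₃ : E) :
    derivationDefect T f (t • x₁) (t • x₂) (t • x₃) = t ^ 3 • derivationDefect T f x₁ x₂ x₃ := by
  simp only [derivationDefect, hf.map_smul, hT1, hT2, hT3, smul_smul, smul_sub]
  ring_nf

end Defect

theorem eq_zero_of_forall_norm_le_mul_rpow {E : Type*} [NormedAddCommGroup E]
    {v : E} {C q : ℝ} (hq : 0 < q) (h : ∀ t : ℝ, 0 < t → ‖v‖ ≤ C * t ^ q) : v = 0 := by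
  have hlim : Tendsto (fun t : ℝ => C * t ^ q) (𝓝[>] 0) (𝓝 0) := by
    have h0 : Tendsto (fun t : ℝ => t ^ q) (𝓝 0) (𝓝 0) := by
      simpa [Real.zero_rpow hq.ne'] using (Real.continuousAt_rpow_const 0 q (Or.inr hq.le)).tendsto
    simpa using (h0.mono_left nhdsWithin_le_nhds).const_mul C
  have hle : ‖v‖ ≤ 0 :=
    ge_of_tendsto hlim (eventually_nhdsWithin_of_forall fun t ht => h t ht)
  exact norm_le_zero_iff.mp hle

theorem stmt_7_general {A : Type*} [NormedAddCommGroup A] [NormedSpace ℂ A]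
    (T : A → A → A → A)
    (hT1 : ∀ (r : ℝ) (a b c : A), T (r • a) b c = r • T a b c)
    (hT2 : ∀ (r : ℝ) (a b c : A), T a (r • b) c = r • T a b c)
    (hT3 : ∀ (r : ℝ) (a b c : A), T a b (r • c) = r • T a b c)
    (f : A → A) (hf : IsLinearMap ℝ f)
    (p θ : ℝ) (hp : 1 < p)
    (h : ∀ x₁ x₂ x₃ : A,
      ‖f (T x₁ x₂ x₃) - T (f x₁) x₂ x₃ - T x₁ (f x₂) x₃ - T x₁ x₂ (f x₃)‖ ≤
        θ * (‖x₁‖ ^ (3 * p) + ‖x₂‖ ^ (3 * p) + ‖x₃‖ ^ (3 * p))) :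
    ∀ x₁ x₂ x₃ : A,
      f (T x₁ x₂ x₃) = T (f x₁) x₂ x₃ + T x₁ (f x₂) x₃ + T x₁ x₂ (f x₃) := by
  intro x₁ x₂ x₃
  rw [← derivationDefect_eq_zero_iff]
  set S := ‖x₁‖ ^ (3 * p) + ‖x₂‖ ^ (3 * p) + ‖x₃‖ ^ (3 * p)
  refine eq_zero_of_forall_norm_le_mul_rpow (C := θ * S) (by linarith : 0 < 3 * p - 3) ?_
  intro t ht
  have hscaled := h (t • x₁) (t • x₂) (t • x₃)
  have hnorm (x : A) : ‖t • x‖ ^ (3 * p) = t ^ (3 * p) * ‖x‖ ^ (3 * p) := by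
    rw [norm_smul, Real.norm_of_nonneg ht.le, Real.mul_rpow ht.le (norm_nonneg x)]
  have hpow : t ^ (3 * p) = t ^ 3 * t ^ (3 * p - 3) := by
    rw [← Real.rpow_natCast, ← Real.rpow_add ht]; norm_num
  rw [← derivationDefect, derivationDefect_smul hT1 hT2 hT3 hf, norm_smul,
    Real.norm_of_nonneg (by positivity), hnorm, hnorm, hnorm, hpow] at hscaled
  refine le_of_mul_le_mul_left ?_ (by positivity : 0 < t ^ 3)
  linarith

theorem stmt_7 {A : Type*} [NormedAddCommGroup A] [NormedSpace ℂ A]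
    (T : A → A → A → A)
    (hT1 : ∀ (r : ℝ) (a b c : A), T (r • a) b c = r • T a b c)
    (hT2 : ∀ (r : ℝ) (a b c : A), T a (r • b) c = r • T a b c)
    (hT3 : ∀ (r : ℝ) (a b c : A), T a b (r • c) = r • T a b c)
    (f : A → A) (hf : IsLinearMap ℝ f)
    (p θ : ℝ) (hp : 1 < p) (hθ : 0 ≤ θ)
    (h : ∀ x₁ x₂ x₃ : A,
      ‖f (T x₁ x₂ x₃) - T (f x₁) x₂ x₃ - T x₁ (f x₂) x₃ - T x₁ x₂ (f x₃)‖ ≤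
        θ * (‖x₁‖ ^ (3 * p) + ‖x₂‖ ^ (3 * p) + ‖x₃‖ ^ (3 * p))) :
    ∀ x₁ x₂ x₃ : A,
      f (T x₁ x₂ x₃) = T (f x₁) x₂ x₃ + T x₁ (f x₂) x₃ + T x₁ x₂ (f x₃) :=
  stmt_7_general T hT1 hT2 hT3 f hf p θ hp h
end

section
/- Let A be a normed space, B a Banach space, p > 1, θ ≥ 0, and f : A → B satisfy ‖3·f(x/3) - f(x)‖ ≤ θ(1 + 2^p)·‖x‖^p for all x ∈ A. Then for every x ∈ A the sequence n ↦ 3ⁿ·f(x/3ⁿ) is a Cauchy sequence in B, and hence converges. -/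
/-!
Write `g n = c ^ n • f ((c ^ n)⁻¹ • x)`. Applying the hypothesis at `(c ^ n)⁻¹ • x` and scaling
by `c ^ n` gives `‖g (n + 1) - g n‖ ≤ K ‖x‖ ^ p (c ^ (1 - p)) ^ n`, and `c ^ (1 - p) < 1` when
`c > 1` and `p > 1`, so consecutive distances are dominated by a geometric series.
-/

lemma pow_mul_rpow_inv_pow_mul {c a : ℝ} (hc : 0 < c) (ha : 0 ≤ a) (p : ℝ) (n : ℕ) :
    c ^ n * ((c ^ n)⁻¹ * a) ^ p = a ^ p * (c ^ (1 - p)) ^ n := by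
  rw [Real.mul_rpow (by positivity) ha, Real.inv_rpow (by positivity),
    ← Real.rpow_pow_comm hc.le, Real.rpow_sub hc, Real.rpow_one, div_pow]
  have : (c ^ p) ^ n ≠ 0 := by positivity
  field_simp

section

variable {A B : Type*} [NormedAddCommGroup A] [NormedSpace ℝ A]
  [NormedAddCommGroup B] [NormedSpace ℝ B]

lemma pow_succ_smul_comp_sub_pow_smul_comp (f : A → B) (c : ℝ) (x : A) (n : ℕ) :
    c ^ (n + 1) • f ((c ^ (n + 1))⁻¹ • x) - c ^ n • f ((c ^ n)⁻¹ • x) =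
      c ^ n • (c • f (c⁻¹ • (c ^ n)⁻¹ • x) - f ((c ^ n)⁻¹ • x)) := by
  rw [smul_sub, smul_smul, smul_smul, ← pow_succ, ← mul_inv, ← pow_succ']

lemma dist_pow_smul_comp_le_geometric {f : A → B} {c p K : ℝ} (hc : 0 < c)
    (h : ∀ x, ‖c • f (c⁻¹ • x) - f x‖ ≤ K * ‖x‖ ^ p) (x : A) (n : ℕ) :
    dist (c ^ n • f ((c ^ n)⁻¹ • x)) (c ^ (n + 1) • f ((c ^ (n + 1))⁻¹ • x)) ≤
      K * ‖x‖ ^ p * (c ^ (1 - p)) ^ n := by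
  have hcn : 0 < c ^ n := pow_pos hc n
  rw [dist_eq_norm', pow_succ_smul_comp_sub_pow_smul_comp, norm_smul, Real.norm_of_nonneg hcn.le]
  calc c ^ n * ‖c • f (c⁻¹ • (c ^ n)⁻¹ • x) - f ((c ^ n)⁻¹ • x)‖
      ≤ c ^ n * (K * ‖(c ^ n)⁻¹ • x‖ ^ p) := by gcongr; exact h _
    _ = K * (c ^ n * ((c ^ n)⁻¹ * ‖x‖) ^ p) := by
        rw [norm_smul, Real.norm_of_nonneg (inv_pos.2 hcn).le]; ring
    _ = K * ‖x‖ ^ p * (c ^ (1 - p)) ^ n := by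
        rw [pow_mul_rpow_inv_pow_mul hc (norm_nonneg x)]; ring

lemma cauchySeq_pow_smul_comp_inv_pow_smul {f : A → B} {c p K : ℝ} (hc : 1 < c) (hp : 1 < p)
    (h : ∀ x, ‖c • f (c⁻¹ • x) - f x‖ ≤ K * ‖x‖ ^ p) (x : A) :
    CauchySeq fun n : ℕ => c ^ n • f ((c ^ n)⁻¹ • x) :=
  cauchySeq_of_le_geometric _ _ (Real.rpow_lt_one_of_one_lt_of_neg hc (by linarith))
    (dist_pow_smul_comp_le_geometric (by linarith) h x)

end

theorem stmt_9_general {A B : Type*} [NormedAddCommGroup A] [NormedSpace ℝ A]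
    [NormedAddCommGroup B] [NormedSpace ℝ B] [CompleteSpace B]
    (f : A → B) (p θ : ℝ) (hp : 1 < p)
    (h : ∀ x : A, ‖(3:ℝ) • f ((3:ℝ)⁻¹ • x) - f x‖ ≤ θ * (1 + 2 ^ p) * ‖x‖ ^ p) :
    ∀ x : A, CauchySeq (fun n : ℕ => ((3:ℝ) ^ n) • f ((((3:ℝ) ^ n)⁻¹) • x)) ∧
      ∃ L : B, Filter.Tendsto (fun n : ℕ => ((3:ℝ) ^ n) • f ((((3:ℝ) ^ n)⁻¹) • x))
        Filter.atTop (nhds L) := by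
  intro x
  have hcauchy := cauchySeq_pow_smul_comp_inv_pow_smul (by norm_num) hp h x
  exact ⟨hcauchy, cauchySeq_tendsto_of_complete hcauchy⟩

theorem stmt_9 {A B : Type*} [NormedAddCommGroup A] [NormedSpace ℝ A]
    [NormedAddCommGroup B] [NormedSpace ℝ B] [CompleteSpace B]
    (f : A → B) (p θ : ℝ) (hp : 1 < p) (hθ : 0 ≤ θ)
    (h : ∀ x : A, ‖(3:ℝ) • f ((3:ℝ)⁻¹ • x) - f x‖ ≤ θ * (1 + 2 ^ p) * ‖x‖ ^ p) :
    ∀ x : A, CauchySeq (fun n : ℕ => ((3:ℝ) ^ n) • f ((((3:ℝ) ^ n)⁻¹) • x)) ∧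
      ∃ L : B, Filter.Tendsto (fun n : ℕ => ((3:ℝ) ^ n) • f ((((3:ℝ) ^ n)⁻¹) • x))
        Filter.atTop (nhds L) :=
  stmt_9_general f p θ hp h
end

section
/- Let A be a normed space, B a Banach space, p > 1, θ ≥ 0, and f : A → B satisfy ‖3·f(x/3) - f(x)‖ ≤ θ(1 + 2^p)·‖x‖^p for all x ∈ A. Define H(x) := lim_{n→∞} 3ⁿ·f(x/3ⁿ). Then ‖H(x) - f(x)‖ ≤ θ(1 + 2^p)·‖x‖^p / (1 - 3^{1-p}) for all x ∈ A. -/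
theorem stmt_10 {A B : Type*} [NormedAddCommGroup A] [NormedSpace ℝ A]
    [NormedAddCommGroup B] [NormedSpace ℝ B] [CompleteSpace B]
    (f : A → B) (p θ : ℝ) (hp : 1 < p) (hθ : 0 ≤ θ)
    (h : ∀ x : A, ‖(3:ℝ) • f ((3:ℝ)⁻¹ • x) - f x‖ ≤ θ * (1 + 2 ^ p) * ‖x‖ ^ p)
    (H : A → B)
    (hH : ∀ x : A, Filter.Tendsto (fun n : ℕ => ((3:ℝ) ^ n) • f ((((3:ℝ) ^ n)⁻¹) • x))
      Filter.atTop (nhds (H x))) :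
    ∀ x : A, ‖H x - f x‖ ≤ θ * (1 + 2 ^ p) * ‖x‖ ^ p / (1 - 3 ^ (1 - p)) := by
  intro x
  set C := θ * (1 + 2 ^ p) * ‖x‖ ^ p with hC
  set r := (3:ℝ) ^ (1 - p) with hr
  have hr0 : 0 < r := Real.rpow_pos_of_pos (by norm_num) _
  have hr1 : r < 1 := by
    rw [hr]
    calc (3:ℝ) ^ (1 - p) < 3 ^ (0:ℝ) :=
          Real.rpow_lt_rpow_of_exponent_lt (by norm_num) (by linarith)
      _ = 1 := Real.rpow_zero 3
  have hC0 : 0 ≤ C := by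
    have h1 : (0:ℝ) ≤ 1 + 2 ^ p := by positivity
    have h2 : (0:ℝ) ≤ ‖x‖ ^ p := Real.rpow_nonneg (norm_nonneg x) p
    positivity
  set g : ℕ → B := fun n => ((3:ℝ) ^ n) • f ((((3:ℝ) ^ n)⁻¹) • x) with hg
  have key : ∀ n, ‖g (n + 1) - g n‖ ≤ C * r ^ n := by
    intro n
    have h3n : (0:ℝ) < (3:ℝ) ^ n := by positivity
    have hx' : (((3:ℝ) ^ (n+1))⁻¹) • x = (3:ℝ)⁻¹ • (((3:ℝ) ^ n)⁻¹ • x) := by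
      rw [smul_smul]; congr 1
      rw [pow_succ, mul_inv]; ring
    have hdiff : g (n + 1) - g n
        = ((3:ℝ) ^ n) • ((3:ℝ) • f ((3:ℝ)⁻¹ • (((3:ℝ) ^ n)⁻¹ • x)) - f (((3:ℝ) ^ n)⁻¹ • x)) := by
      rw [hg]
      simp only [hx']
      rw [smul_sub, smul_smul, pow_succ, mul_smul]
    rw [hdiff, norm_smul, Real.norm_eq_abs, abs_of_pos h3n]
    have hb := h (((3:ℝ) ^ n)⁻¹ • x)
    have hnorm : ‖(((3:ℝ) ^ n)⁻¹ : ℝ) • x‖ = ((3:ℝ) ^ n)⁻¹ * ‖x‖ := by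
      rw [norm_smul, Real.norm_eq_abs, abs_of_pos (by positivity)]
    have hb2 : ‖(3:ℝ) • f ((3:ℝ)⁻¹ • (((3:ℝ) ^ n)⁻¹ • x)) - f (((3:ℝ) ^ n)⁻¹ • x)‖
        ≤ θ * (1 + 2 ^ p) * ((((3:ℝ) ^ n)⁻¹) ^ p * ‖x‖ ^ p) := by
      calc _ ≤ θ * (1 + 2 ^ p) * ‖(((3:ℝ) ^ n)⁻¹ : ℝ) • x‖ ^ p := hb
        _ = θ * (1 + 2 ^ p) * ((((3:ℝ) ^ n)⁻¹) ^ p * ‖x‖ ^ p) := by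
            rw [hnorm, Real.mul_rpow (by positivity) (norm_nonneg x)]
    calc (3:ℝ) ^ n * ‖(3:ℝ) • f ((3:ℝ)⁻¹ • (((3:ℝ) ^ n)⁻¹ • x)) - f (((3:ℝ) ^ n)⁻¹ • x)‖
        ≤ (3:ℝ) ^ n * (θ * (1 + 2 ^ p) * ((((3:ℝ) ^ n)⁻¹) ^ p * ‖x‖ ^ p)) :=
          mul_le_mul_of_nonneg_left hb2 (le_of_lt h3n)
      _ = C * r ^ n := by
          rw [hC, hr]
          have e1 : ((3:ℝ) ^ n : ℝ) = (3:ℝ) ^ (n : ℝ) := (Real.rpow_natCast 3 n).symm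
          have e2 : (((3:ℝ) ^ n)⁻¹ : ℝ) ^ p = (3:ℝ) ^ (-(n:ℝ) * p) := by
            rw [e1, ← Real.rpow_neg (by norm_num), ← Real.rpow_mul (by norm_num)]
          have e3 : ((3:ℝ) ^ (1 - p)) ^ n = (3:ℝ) ^ ((1 - p) * (n:ℝ)) := by
            rw [Real.rpow_mul (by norm_num), Real.rpow_natCast]
          have e4 : (3:ℝ) ^ (n:ℝ) * (3:ℝ) ^ (-(n:ℝ) * p) = (3:ℝ) ^ ((1 - p) * (n:ℝ)) := by
            rw [← Real.rpow_add (by norm_num)]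
            congr 1; ring
          rw [e2, e3, e1, ← e4]
          ring
  have g0 : g 0 = f x := by simp [hg]
  have bound : ∀ n, ‖g n - f x‖ ≤ C / (1 - r) := by
    intro n
    rw [← g0]
    have tel : ∑ i ∈ Finset.range n, (g (i + 1) - g i) = g n - g 0 :=
      Finset.sum_range_sub g n
    calc ‖g n - g 0‖ = ‖∑ i ∈ Finset.range n, (g (i + 1) - g i)‖ := by rw [tel]
      _ ≤ ∑ i ∈ Finset.range n, ‖g (i + 1) - g i‖ := norm_sum_le _ _
      _ ≤ ∑ i ∈ Finset.range n, C * r ^ i := Finset.sum_le_sum fun i _ => key i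
      _ = C * ∑ i ∈ Finset.range n, r ^ i := by rw [Finset.mul_sum]
      _ ≤ C * (1 / (1 - r)) := by
          apply mul_le_mul_of_nonneg_left _ hC0
          have hrn : 0 < r ^ n := pow_pos hr0 n
          have h1r : 0 < 1 - r := by linarith
          rw [geom_sum_eq (ne_of_lt hr1)]
          rw [show (r ^ n - 1) / (r - 1) = (1 - r ^ n) / (1 - r) by
            rw [← neg_sub 1 (r ^ n), ← neg_sub 1 r, neg_div_neg_eq]]
          exact (div_le_div_iff_of_pos_right h1r).2 (by linarith)
      _ = C / (1 - r) := by ring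
  have := le_of_tendsto' (((hH x).sub tendsto_const_nhds).norm) bound
  exact this
end

section
/- Let A be a normed space, B a Banach space, p > 1, θ ≥ 0, and f : A → B satisfy the inequality ‖f((x₂-x₁)/3) + f((x₁-3x₃)/3) + f((3x₁+3x₃-x₂)/3) - f(x₁)‖ ≤ θ(‖x₁‖^p + ‖x₂‖^p + ‖x₃‖^p) for all x₁,x₂,x₃ ∈ A, and suppose H(x) := lim_{n→∞} 3ⁿ·f(x/3ⁿ) exists for all x. Then H satisfies the exact functional equation H((x₂-x₁)/3) + H((x₁-3x₃)/3) + H((3x₁+3x₃-x₂)/3) = H(x₁) for all x₁,x₂,x₃ ∈ A. -/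
/-!
Write `D f` for the defect of the functional equation. Since all arguments of `D` are linear
in `(x₁, x₂, x₃)`, rescaling gives `D (3ⁿ • f (3⁻ⁿ • ·)) x = 3ⁿ • D f (3⁻ⁿ • x)`, whose norm is
at most `3ⁿ · 3^{-np} · θ (‖x₁‖^p + ‖x₂‖^p + ‖x₃‖^p) = (3^{1-p})ⁿ · const → 0` because `p > 1`.
Passing to the pointwise limit `3ⁿ • f (3⁻ⁿ • ·) → H` gives `D H = 0`.
-/

open Filter Topology

section FunctionalEquation

variable {A B : Type*} [AddCommGroup A] [Module ℝ A] [AddCommGroup B]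

noncomputable def feDefect (f : A → B) (x₁ x₂ x₃ : A) : B :=
  f ((3:ℝ)⁻¹ • (x₂ - x₁)) + f ((3:ℝ)⁻¹ • (x₁ - (3:ℝ) • x₃)) +
    f ((3:ℝ)⁻¹ • ((3:ℝ) • x₁ + (3:ℝ) • x₃ - x₂)) - f x₁

theorem feDefect_eq_zero_of_tendsto [TopologicalSpace B] [IsTopologicalAddGroup B] [T2Space B]
    {g : ℕ → A → B} {H : A → B} (hg : ∀ x, Tendsto (fun n => g n x) atTop (𝓝 (H x)))
    {x₁ x₂ x₃ : A} (hdefect : Tendsto (fun n => feDefect (g n) x₁ x₂ x₃) atTop (𝓝 0)) :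
    feDefect H x₁ x₂ x₃ = 0 :=
  tendsto_nhds_unique ((((hg _).add (hg _)).add (hg _)).sub (hg _)) hdefect

theorem feDefect_smul_comp_smul [Module ℝ B] (f : A → B) (c a : ℝ) (x₁ x₂ x₃ : A) :
    feDefect (fun x => c • f (a • x)) x₁ x₂ x₃ = c • feDefect f (a • x₁) (a • x₂) (a • x₃) := by
  simp only [feDefect, smul_sub, smul_add, smul_comm a]

end FunctionalEquation

theorem norm_feDefect_smul_comp_inv_smul_le {A B : Type*} [NormedAddCommGroup A] [NormedSpace ℝ A]
    [NormedAddCommGroup B] [NormedSpace ℝ B] {f : A → B} {p θ : ℝ}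
    (h : ∀ x₁ x₂ x₃ : A, ‖feDefect f x₁ x₂ x₃‖ ≤ θ * (‖x₁‖ ^ p + ‖x₂‖ ^ p + ‖x₃‖ ^ p))
    {c : ℝ} (hc : 0 < c) (x₁ x₂ x₃ : A) :
    ‖feDefect (fun x => c • f (c⁻¹ • x)) x₁ x₂ x₃‖ ≤
      c * c⁻¹ ^ p * (θ * (‖x₁‖ ^ p + ‖x₂‖ ^ p + ‖x₃‖ ^ p)) := by
  have norm_inv_smul_rpow (y : A) : ‖c⁻¹ • y‖ ^ p = c⁻¹ ^ p * ‖y‖ ^ p := by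
    rw [norm_smul, Real.norm_of_nonneg (inv_nonneg.2 hc.le),
      Real.mul_rpow (inv_nonneg.2 hc.le) (norm_nonneg y)]
  rw [feDefect_smul_comp_smul, norm_smul, Real.norm_of_nonneg hc.le]
  calc c * ‖feDefect f (c⁻¹ • x₁) (c⁻¹ • x₂) (c⁻¹ • x₃)‖
      ≤ c * (θ * (‖c⁻¹ • x₁‖ ^ p + ‖c⁻¹ • x₂‖ ^ p + ‖c⁻¹ • x₃‖ ^ p)) := by
        gcongr
        exact h _ _ _
    _ = c * c⁻¹ ^ p * (θ * (‖x₁‖ ^ p + ‖x₂‖ ^ p + ‖x₃‖ ^ p)) := by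
        simp only [norm_inv_smul_rpow]
        ring

theorem tendsto_pow_mul_inv_pow_rpow_atTop_zero {c p : ℝ} (hc : 1 < c) (hp : 1 < p) :
    Tendsto (fun n : ℕ => c ^ n * (c ^ n)⁻¹ ^ p) atTop (𝓝 0) := by
  have hc₀ : 0 < c := zero_lt_one.trans hc
  have geometric (n : ℕ) : c ^ n * (c ^ n)⁻¹ ^ p = (c ^ (1 - p)) ^ n := by
    rw [Real.inv_rpow (by positivity), ← Real.rpow_natCast_mul hc₀.le, Real.rpow_sub hc₀,
      Real.rpow_one, div_pow, ← Real.rpow_mul_natCast hc₀.le, mul_comm p, div_eq_mul_inv]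
  simp only [geometric]
  exact tendsto_pow_atTop_nhds_zero_of_lt_one (Real.rpow_nonneg hc₀.le _)
    (Real.rpow_lt_one_of_one_lt_of_neg hc (by linarith))

theorem stmt_13_general {A B : Type*} [NormedAddCommGroup A] [NormedSpace ℝ A]
    [NormedAddCommGroup B] [NormedSpace ℝ B]
    (f : A → B) (p θ : ℝ) (hp : 1 < p)
    (h : ∀ x₁ x₂ x₃ : A,
      ‖f ((3:ℝ)⁻¹ • (x₂ - x₁)) + f ((3:ℝ)⁻¹ • (x₁ - (3:ℝ) • x₃)) +
        f ((3:ℝ)⁻¹ • ((3:ℝ) • x₁ + (3:ℝ) • x₃ - x₂)) - f x₁‖ ≤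
        θ * (‖x₁‖ ^ p + ‖x₂‖ ^ p + ‖x₃‖ ^ p))
    (H : A → B)
    (hH : ∀ x : A, Filter.Tendsto (fun n : ℕ => ((3:ℝ) ^ n) • f ((((3:ℝ) ^ n)⁻¹) • x))
      Filter.atTop (nhds (H x))) :
    ∀ x₁ x₂ x₃ : A,
      H ((3:ℝ)⁻¹ • (x₂ - x₁)) + H ((3:ℝ)⁻¹ • (x₁ - (3:ℝ) • x₃)) +
        H ((3:ℝ)⁻¹ • ((3:ℝ) • x₁ + (3:ℝ) • x₃ - x₂)) = H x₁ := by
  intro x₁ x₂ x₃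
  rw [← sub_eq_zero]
  refine feDefect_eq_zero_of_tendsto hH (squeeze_zero_norm
    (fun n => norm_feDefect_smul_comp_inv_smul_le h (by positivity) x₁ x₂ x₃) ?_)
  simpa using (tendsto_pow_mul_inv_pow_rpow_atTop_zero (by norm_num : (1:ℝ) < 3) hp).mul_const
    (θ * (‖x₁‖ ^ p + ‖x₂‖ ^ p + ‖x₃‖ ^ p))

theorem stmt_13 {A B : Type*} [NormedAddCommGroup A] [NormedSpace ℝ A]
    [NormedAddCommGroup B] [NormedSpace ℝ B] [CompleteSpace B]
    (f : A → B) (p θ : ℝ) (hp : 1 < p) (hθ : 0 ≤ θ)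
    (h : ∀ x₁ x₂ x₃ : A,
      ‖f ((3:ℝ)⁻¹ • (x₂ - x₁)) + f ((3:ℝ)⁻¹ • (x₁ - (3:ℝ) • x₃)) +
        f ((3:ℝ)⁻¹ • ((3:ℝ) • x₁ + (3:ℝ) • x₃ - x₂)) - f x₁‖ ≤
        θ * (‖x₁‖ ^ p + ‖x₂‖ ^ p + ‖x₃‖ ^ p))
    (H : A → B)
    (hH : ∀ x : A, Filter.Tendsto (fun n : ℕ => ((3:ℝ) ^ n) • f ((((3:ℝ) ^ n)⁻¹) • x))
      Filter.atTop (nhds (H x))) :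
    ∀ x₁ x₂ x₃ : A,
      H ((3:ℝ)⁻¹ • (x₂ - x₁)) + H ((3:ℝ)⁻¹ • (x₁ - (3:ℝ) • x₃)) +
        H ((3:ℝ)⁻¹ • ((3:ℝ) • x₁ + (3:ℝ) • x₃ - x₂)) = H x₁ :=
  stmt_13_general f p θ hp h H hH
end

section
/- Let A be a normed space, B a Banach space, 0 ≤ p < 1, θ ≥ 0, and f : A → B satisfy ‖3·f(x/3) - f(x)‖ ≤ θ(1 + 2^p)·‖x‖^p for all x ∈ A. Then the sequence n ↦ f(3ⁿx)/3ⁿ is Cauchy for each x, and its limit H satisfies ‖H(x) - f(x)‖ ≤ θ(1 + 2^p)·‖x‖^p / (3^{1-p} - 1) for all x ∈ A. -/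
/-! Put `r = c ^ (p - 1) < 1`. The defect inequality at `cⁿ⁺¹ x`, divided by `cⁿ⁺¹`, bounds
consecutive terms of `n ↦ f (cⁿ x) / cⁿ` by `M ‖x‖ᵖ rⁿ⁺¹`, so the sequence is Cauchy and its limit
lies within `M ‖x‖ᵖ r / (1 - r) = M ‖x‖ᵖ / (c ^ (1 - p) - 1)` of `f x`. -/

open Filter Topology

section HyersSeq

variable {E F : Type*} [NormedAddCommGroup E] [NormedSpace ℝ E]
  [NormedAddCommGroup F] [NormedSpace ℝ F]

noncomputable def hyersSeq (c : ℝ) (f : E → F) (x : E) (n : ℕ) : F :=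
  (c ^ n)⁻¹ • f (c ^ n • x)

lemma norm_pow_smul_rpow {c : ℝ} (hc : 0 < c) (n : ℕ) (p : ℝ) (x : E) :
    ‖c ^ n • x‖ ^ p = (c ^ p) ^ n * ‖x‖ ^ p := by
  rw [norm_smul, Real.norm_of_nonneg (by positivity),
    Real.mul_rpow (by positivity) (norm_nonneg x), Real.rpow_pow_comm hc.le]

lemma dist_hyersSeq_succ_le {c p M : ℝ} (hc : 0 < c) {f : E → F}
    (h : ∀ x, ‖c • f (c⁻¹ • x) - f x‖ ≤ M * ‖x‖ ^ p) (x : E) (n : ℕ) :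
    dist (hyersSeq c f x n) (hyersSeq c f x (n + 1))
      ≤ M * ‖x‖ ^ p * c ^ (p - 1) * (c ^ (p - 1)) ^ n := by
  have hstep : c⁻¹ • c ^ (n + 1) • x = c ^ n • x := by
    rw [smul_smul, pow_succ', inv_mul_cancel_left₀ hc.ne']
  have hsplit : hyersSeq c f x n = (c ^ (n + 1))⁻¹ • c • f (c ^ n • x) := by
    rw [hyersSeq, smul_smul, pow_succ, mul_inv, inv_mul_cancel_right₀ hc.ne']
  have hrate : (c ^ (n + 1))⁻¹ * (c ^ p) ^ (n + 1) = c ^ (p - 1) * (c ^ (p - 1)) ^ n := by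
    rw [← pow_succ', Real.rpow_sub_one hc.ne', div_pow, inv_mul_eq_div]
  calc dist (hyersSeq c f x n) (hyersSeq c f x (n + 1))
      = (c ^ (n + 1))⁻¹ * ‖c • f (c⁻¹ • c ^ (n + 1) • x) - f (c ^ (n + 1) • x)‖ := by
        rw [hstep, hsplit, hyersSeq, dist_eq_norm, ← smul_sub, norm_smul,
          Real.norm_of_nonneg (by positivity)]
    _ ≤ (c ^ (n + 1))⁻¹ * (M * ‖c ^ (n + 1) • x‖ ^ p) :=
        mul_le_mul_of_nonneg_left (h _) (by positivity)
    _ = M * ‖x‖ ^ p * ((c ^ (n + 1))⁻¹ * (c ^ p) ^ (n + 1)) := by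
        rw [norm_pow_smul_rpow hc]; ring
    _ = M * ‖x‖ ^ p * c ^ (p - 1) * (c ^ (p - 1)) ^ n := by
        rw [hrate]; ring

variable {c p M : ℝ} {f : E → F}

lemma cauchySeq_hyersSeq (hc : 1 < c) (hp : p < 1)
    (h : ∀ x, ‖c • f (c⁻¹ • x) - f x‖ ≤ M * ‖x‖ ^ p) (x : E) :
    CauchySeq (hyersSeq c f x) :=
  cauchySeq_of_le_geometric _ _ (Real.rpow_lt_one_of_one_lt_of_neg hc (by linarith))
    (dist_hyersSeq_succ_le (by linarith) h x)

lemma norm_sub_le_of_tendsto_hyersSeq (hc : 1 < c) (hp : p < 1)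
    (h : ∀ x, ‖c • f (c⁻¹ • x) - f x‖ ≤ M * ‖x‖ ^ p) {x : E} {y : F}
    (hy : Tendsto (hyersSeq c f x) atTop (𝓝 y)) :
    ‖y - f x‖ ≤ M * ‖x‖ ^ p / (c ^ (1 - p) - 1) := by
  set r := c ^ (p - 1)
  have hr0 : 0 < r := Real.rpow_pos_of_pos (by linarith) _
  have hr1 : r < 1 := Real.rpow_lt_one_of_one_lt_of_neg hc (by linarith)
  have hinv : c ^ (1 - p) = r⁻¹ := by
    rw [← Real.rpow_neg (by linarith), neg_sub]
  have hdist := dist_le_of_le_geometric_of_tendsto₀ r _ hr1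
    (dist_hyersSeq_succ_le (by linarith) h x) hy
  have hsum : M * ‖x‖ ^ p * r / (1 - r) = M * ‖x‖ ^ p / (c ^ (1 - p) - 1) := by
    rw [hinv]
    field_simp [(sub_pos.2 hr1).ne']
  simp only [hyersSeq, pow_zero, inv_one, one_smul] at hdist
  rw [← dist_eq_norm, dist_comm, ← hsum]
  exact hdist

end HyersSeq

theorem stmt_15_general {A B : Type*} [NormedAddCommGroup A] [NormedSpace ℝ A]
    [NormedAddCommGroup B] [NormedSpace ℝ B]
    (f : A → B) (p θ : ℝ) (hp : p < 1)
    (h : ∀ x : A, ‖(3:ℝ) • f ((3:ℝ)⁻¹ • x) - f x‖ ≤ θ * (1 + 2 ^ p) * ‖x‖ ^ p) :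
    (∀ x : A, CauchySeq (fun n : ℕ => (((3:ℝ) ^ n)⁻¹) • f (((3:ℝ) ^ n) • x))) ∧
      ∀ H : A → B,
        (∀ x : A, Filter.Tendsto (fun n : ℕ => (((3:ℝ) ^ n)⁻¹) • f (((3:ℝ) ^ n) • x))
          Filter.atTop (nhds (H x))) →
        ∀ x : A, ‖H x - f x‖ ≤ θ * (1 + 2 ^ p) * ‖x‖ ^ p / (3 ^ (1 - p) - 1) :=
  ⟨cauchySeq_hyersSeq (by norm_num) hp h,
    fun _ hH _ => norm_sub_le_of_tendsto_hyersSeq (by norm_num) hp h (hH _)⟩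

theorem stmt_15 {A B : Type*} [NormedAddCommGroup A] [NormedSpace ℝ A]
    [NormedAddCommGroup B] [NormedSpace ℝ B] [CompleteSpace B]
    (f : A → B) (p θ : ℝ) (hp0 : 0 ≤ p) (hp : p < 1) (hθ : 0 ≤ θ)
    (h : ∀ x : A, ‖(3:ℝ) • f ((3:ℝ)⁻¹ • x) - f x‖ ≤ θ * (1 + 2 ^ p) * ‖x‖ ^ p) :
    (∀ x : A, CauchySeq (fun n : ℕ => (((3:ℝ) ^ n)⁻¹) • f (((3:ℝ) ^ n) • x))) ∧
      ∀ H : A → B,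
        (∀ x : A, Filter.Tendsto (fun n : ℕ => (((3:ℝ) ^ n)⁻¹) • f (((3:ℝ) ^ n) • x))
          Filter.atTop (nhds (H x))) →
        ∀ x : A, ‖H x - f x‖ ≤ θ * (1 + 2 ^ p) * ‖x‖ ^ p / (3 ^ (1 - p) - 1) :=
  stmt_15_general f p θ hp h
end
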